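/- Assume β > 3 and α = 1/β. Let w = x_k x_{k+1} … x_{k+m−1} ∈ L^{α,β}_m. Define y ∈ A^ℤ by y_j = x_j for k ≤ j ≤ k+m−1, y_{k+m} = g(w), and y_j = 1 for all other j. Then y ∈ Σ^{α,β}. -/

import Mathlib

open Filter Topology MeasureTheory ENNReal
open scoped Classical

noncomputable section

namespace AB

/-- The (α,β)-transformation `T(x) = βx + α − ⌊βx + α⌋`. -/
def T (α β : ℝ) (x : ℝ) : ℝ := β * x + α - ⌊β * x + α⌋

/-- `λ = ⌈α+β⌉ − 1`, as a natural number. -/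
def lamNat (α β : ℝ) : ℕ := (⌈α + β⌉ - 1).toNat

/-- The digit of `x ∈ [0,1)`: the index `k` with `x ∈ J_k`, namely `⌊βx + α⌋`. -/
def digit (α β : ℝ) (x : ℝ) : ℕ := (⌊β * x + α⌋).toNat

/-- The (α,β)-expansion of `x`. -/
def iSeq (α β : ℝ) (x : ℝ) : ℕ → ℕ := fun n => digit α β ((T α β)^[n] x)

/-- The one-sided (α,β)-shift: closure (in the product topology) of the set of expansions. -/
def Xab (α β : ℝ) : Set (ℕ → ℕ) :=
  closure {s | ∃ x ∈ Set.Ico (0 : ℝ) 1, s = iSeq α β x}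

/-- Word of given length read in a one-sided sequence starting at position `k`. -/
def wordN (s : ℕ → ℕ) (k len : ℕ) : List ℕ := (List.range len).map fun i => s (k + i)

/-- The language of the (α,β)-shift: finite words appearing in points of `Xab`. -/
def Lang (α β : ℝ) : Set (List ℕ) :=
  {w | ∃ s ∈ Xab α β, ∃ k : ℕ, w = wordN s k w.length}

/-- `a = i_{α,β}(0)`. -/
def aSeq (α β : ℝ) : ℕ → ℕ := iSeq α β 0

/-- The prefix of length `l` of a sequence, as a word. -/
def pre (s : ℕ → ℕ) (l : ℕ) : List ℕ := (List.range l).map s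

/-- Lexicographic (non-strict) order on words. -/
def wordLe (u v : List ℕ) : Prop := u = v ∨ List.Lex (· < ·) u v

/-- Lexicographic (non-strict) order on one-sided sequences. -/
def seqLe (x y : ℕ → ℕ) : Prop :=
  x = y ∨ ∃ n : ℕ, (∀ i < n, x i = y i) ∧ x n < y n

/-- The largest `k ≤ |w|` such that the length-`k` suffix of `w` equals the length-`k`
prefix of `s` (this is `k1` for `s = a` and `k2` for `s = b`). -/
def kk (s : ℕ → ℕ) (w : List ℕ) : ℕ :=
  Nat.findGreatest (fun k => w.drop (w.length - k) = pre s k) w.length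

/-- The set of finite prefixes of a sequence (`P^a`, `P^b`). -/
def Pset (s : ℕ → ℕ) : Set (List ℕ) := {u | ∃ l : ℕ, u = pre s l}

/-- The distinguished suffix `s(w)`. -/
def sWord (a b : ℕ → ℕ) (w : List ℕ) : List ℕ :=
  if kk b w < kk a w then w.drop (w.length - kk a w)
  else if kk a w < kk b w then w.drop (w.length - kk b w)
  else []

/-- The hat operation on `P = P^a ∪ P^b` (for `β > 3`, `α = 1/β`). -/
def hatP (a b : ℕ → ℕ) (lam : ℕ) (u : List ℕ) : List ℕ :=
  if u = [] then []
  else if u ∈ Pset a then u.dropLast ++ [u.getLast?.getD 0 + 1]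
  else if 3 ≤ u.getLast?.getD 0 then u.dropLast ++ [u.getLast?.getD 0 - 1]
  else
    (u.set (u.length - kk a u.dropLast - 2) (u.getD (u.length - kk a u.dropLast - 2) 0 - 1)).set
      (u.length - kk a u.dropLast - 1) (lam - 1)

/-- `ŵ` for `w = v·s(w)`: replace the distinguished suffix by its hat. -/
def hatW (a b : ℕ → ℕ) (lam : ℕ) (w : List ℕ) : List ℕ :=
  w.take (w.length - (sWord a b w).length) ++ hatP a b lam (sWord a b w)

/-- `w̃`: the hat operation applied twice. -/
def tildeW (a b : ℕ → ℕ) (lam : ℕ) (w : List ℕ) : List ℕ :=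
  hatW a b lam (hatW a b lam w)

/-- `z(u)` for `u ∈ P^b`. -/
def zP (a b : ℕ → ℕ) (u : List ℕ) : ℕ :=
  if u = [] then 0
  else sSup ({k : ℕ | (u ++ pre (fun i => a (kk a u + i)) k) ∈ Pset b} ∪ {0})

/-- `z(w)` for a word `w` in the language. -/
def zW (a b : ℕ → ℕ) (w : List ℕ) : ℕ :=
  if kk a w < kk b w then zP a b (w.drop (w.length - kk b w)) else 0

/-- `z̄(n) = max{z(u) : u prefix of b, |u| ≤ n}`. -/
def zbar (a b : ℕ → ℕ) (n : ℕ) : ℕ :=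
  (Finset.range (n + 1)).sup fun l => zP a b (pre b l)

/-- The natural extension `Σ^{α,β}`. -/
def SigmaAB (α β : ℝ) : Set (ℤ → ℕ) :=
  {x | ∀ k : ℤ, (fun n : ℕ => x (k + n)) ∈ Xab α β}

/-- `σ^j` on two-sided sequences. -/
def shiftI {A : Type*} (j : ℤ) (x : ℤ → A) : ℤ → A := fun n => x (n + j)

/-- Word of given length read in a two-sided sequence starting at position `k`. -/
def wordZ (x : ℤ → ℕ) (k : ℤ) (len : ℕ) : List ℕ := (List.range len).map fun i => x (k + i)

/-- The map `g : L^{α,β} → {0,1}`. -/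
def gW (a b : ℕ → ℕ) (w : List ℕ) : ℕ :=
  if kk a w = 0 ∧ 0 < kk b w ∧ b (kk b w) ≤ 1 then 0 else 1

/-- `w^♯`: the word `w` placed at positions `k,…,k+|w|−1`, followed by `g(w)` at
position `k+|w|`, and `1` at all other positions. -/
def wSharp (a b : ℕ → ℕ) (k : ℤ) (w : List ℕ) : ℤ → ℕ :=
  fun j => if k ≤ j ∧ j < k + w.length then w.getD (j - k).toNat 1
           else if j = k + w.length then gW a b w else 1

/-- The finite approximation sets `E^n ⊆ Σ^{α,β}`. -/
def En (α β : ℝ) (b : ℕ → ℕ) (n : ℕ) : Set (ℤ → ℕ) :=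
  {x | wordZ x (-(n : ℤ)) (2 * n + 1) ∈ Lang α β ∧
       x ((n : ℤ) + 1) = gW (aSeq α β) b (wordZ x (-(n : ℤ)) (2 * n + 1)) ∧
       ∀ j : ℤ, j < -(n : ℤ) ∨ (n : ℤ) + 1 < j → x j = 1}

/-- `s(x_k^-) = ε` for the left-infinite word `x_{(-∞,k-1]}`: no nonempty suffix of it is a
prefix of `a` or of `b`. -/
def leftStar (a b : ℕ → ℕ) (x : ℤ → ℕ) (k : ℤ) : Prop :=
  (∀ K : ℕ, 1 ≤ K → ¬ ∀ i : ℕ, i < K → x (k - K + i) = a i) ∧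
  (∀ K : ℕ, 1 ≤ K → ¬ ∀ i : ℕ, i < K → x (k - K + i) = b i)

/-- `E^n_{[k,l]}(v)`. -/
def EnCyl (α β : ℝ) (b : ℕ → ℕ) (n : ℕ) (k l : ℤ) (v : List ℕ) : Set (ℤ → ℕ) :=
  {x ∈ En α β b n | wordZ x k (l - k + 1).toNat = v}

/-- `E^{*,n}_{[k,l]}(v)`. -/
def EnCylStar (α β : ℝ) (b : ℕ → ℕ) (n : ℕ) (k l : ℤ) (v : List ℕ) : Set (ℤ → ℕ) :=
  {x ∈ EnCyl α β b n k l v | leftStar (aSeq α β) b x k}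

/-- The Birkhoff sum `∑_{j=−n}^{n} φ(σ^j x)`. -/
def birkhoff (φ : (ℤ → ℕ) → ℝ) (n : ℕ) (x : ℤ → ℕ) : ℝ :=
  ∑ j ∈ Finset.Icc (-(n : ℤ)) (n : ℤ), φ (shiftI j x)

/-- `Ξ^n_{[k,l]}(v)`. -/
def Xi (α β : ℝ) (b : ℕ → ℕ) (φ : (ℤ → ℕ) → ℝ) (n : ℕ) (k l : ℤ) (v : List ℕ) : ℝ :=
  ∑' x : (EnCyl α β b n k l v), Real.exp (birkhoff φ n x.1)

/-- `Ξ^{*,n}_{[k,l]}(v)`. -/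
def XiStar (α β : ℝ) (b : ℕ → ℕ) (φ : (ℤ → ℕ) → ℝ) (n : ℕ) (k l : ℤ) (v : List ℕ) : ℝ :=
  ∑' x : (EnCylStar α β b n k l v), Real.exp (birkhoff φ n x.1)

/-- `δ_i(f)`, as an extended nonnegative real. -/
def oscE {A : Type*} (f : (ℤ → A) → ℝ) (i : ℤ) : ℝ≥0∞ :=
  ⨆ (x : ℤ → A) (y : ℤ → A) (_ : ∀ k : ℤ, k ≠ i → x k = y k), ENNReal.ofReal |f x - f y|

/-- `‖f‖_δ` for a function on the full shift. -/
def enormFull {A : Type*} (f : (ℤ → A) → ℝ) : ℝ≥0∞ := ∑' i : ℤ, oscE f i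

/-- `‖f‖_δ` for a function on a subshift `X`: infimum over continuous extensions. -/
def enormOn {A : Type*} [TopologicalSpace A] (X : Set (ℤ → A)) (f : (ℤ → A) → ℝ) : ℝ≥0∞ :=
  ⨅ (g : (ℤ → A) → ℝ) (_ : Continuous g) (_ : ∀ x ∈ X, g x = f x), enormFull g

/-- `f` has bounded total oscillations on `X` (i.e. `f ∈ B(X)`). -/
def BTO {A : Type*} [TopologicalSpace A] (X : Set (ℤ → A)) (f : (ℤ → A) → ℝ) : Prop :=
  ContinuousOn f X ∧ enormOn X f ≠ ⊤

/-- The real value of `‖f‖_δ`. -/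
def dnorm {A : Type*} [TopologicalSpace A] (X : Set (ℤ → A)) (f : (ℤ → A) → ℝ) : ℝ :=
  (enormOn X f).toReal

/-- The pressure `p(φ)`. -/
def pressure (α β : ℝ) (b : ℕ → ℕ) (φ : (ℤ → ℕ) → ℝ) : ℝ :=
  limUnder atTop fun n : ℕ =>
    Real.log (∑' x : (En α β b n), Real.exp (birkhoff φ n x.1)) / (2 * n + 1)

/-- `ν` is a tangent functional to the pressure at `φ` (an equilibrium measure for `φ`). -/
def IsTangent (α β : ℝ) (b : ℕ → ℕ) (φ : (ℤ → ℕ) → ℝ) (ν : Measure (ℤ → ℕ)) : Prop :=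
  ∀ f : (ℤ → ℕ) → ℝ, ContinuousOn f (SigmaAB α β) →
    pressure α β b φ + ∫ x, f x ∂ν ≤ pressure α β b (fun x => φ x + f x)

/-- The cylinder `[x_1 … x_m]` in `Σ^{α,β}`. -/
def cyl (α β : ℝ) (x : ℤ → ℕ) (m : ℕ) : Set (ℤ → ℕ) :=
  {y ∈ SigmaAB α β | ∀ i : ℕ, 1 ≤ i → i ≤ m → y (i : ℤ) = x (i : ℤ)}

/-- `ν` is a weak Gibbs measure for `ψ` on `Σ^{α,β}`. -/
def WeakGibbs (α β : ℝ) (ν : Measure (ℤ → ℕ)) (ψ : (ℤ → ℕ) → ℝ) : Prop :=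
  ∀ δ : ℝ, 0 < δ → ∃ N : ℕ, ∀ m : ℕ, N ≤ m → ∀ x ∈ SigmaAB α β,
    |Real.log (ν (cyl α β x m)).toReal / m -
      (∑ l ∈ Finset.Icc (1 : ℤ) (m : ℤ), ψ (shiftI l x)) / m| ≤ δ


/-- Concatenation `w·x` of a word and a one-sided sequence. -/
def wordApp (w : List ℕ) (x : ℕ → ℕ) : ℕ → ℕ :=
  fun n => if n < w.length then w.getD n 1 else x (n - w.length)

/-- `σ^k` on one-sided sequences. -/
def shiftN (k : ℕ) (s : ℕ → ℕ) : ℕ → ℕ := fun n => s (k + n)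

end AB

/-!
For `w` in the language, `T^{|w|}` maps the cylinder of `w` onto an interval `[γ_w, δ_w)`: `γ_w`
is `α = T 0` or `0` according as some nonempty suffix of `w` is a prefix of `a` or not, and
`δ_w = T^{k₂(w)}(1⁻)` lies on the left orbit of `1`; both ends move affinely when a digit is
appended. The rule defining `g` is exactly what puts `g(w)/β` into this interval, and
`T(g(w)/β) = α` is the fixed point of `T`, with digit `1`. So `w g(w) 1 1 1 …` is an expansion,
and so is every tail of `y`: to the right of `k` the tails are its shifts, and to the left they
arise by prepending `1`s, possible since for `β > 3` every point of `[0,1)` has a `T`-preimage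
with digit `1`.
-/

namespace AB

section Expansions

variable {α β : ℝ}

def expansions (α β : ℝ) : Set (ℕ → ℕ) := {s | ∃ x ∈ Set.Ico (0 : ℝ) 1, s = iSeq α β x}

lemma T_mem_Ico (x : ℝ) : T α β x ∈ Set.Ico (0 : ℝ) 1 :=
  ⟨Int.fract_nonneg _, Int.fract_lt_one _⟩

lemma iterate_T_mem_Ico {x : ℝ} (hx : x ∈ Set.Ico (0 : ℝ) 1) :
    ∀ n : ℕ, (T α β)^[n] x ∈ Set.Ico (0 : ℝ) 1
  | 0 => hx
  | n + 1 => by rw [Function.iterate_succ_apply']; exact T_mem_Ico _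

lemma iSeq_iterate (x : ℝ) (k n : ℕ) : iSeq α β ((T α β)^[k] x) n = iSeq α β x (k + n) := by
  simp only [iSeq, ← Function.iterate_add_apply, Nat.add_comm n k]

lemma shiftN_iSeq (k : ℕ) (x : ℝ) : shiftN k (iSeq α β x) = iSeq α β ((T α β)^[k] x) :=
  funext fun n => (iSeq_iterate x k n).symm

lemma shiftN_mem_expansions (k : ℕ) {s : ℕ → ℕ} (hs : s ∈ expansions α β) :
    shiftN k s ∈ expansions α β := by
  obtain ⟨x, hx, rfl⟩ := hs
  exact ⟨_, iterate_T_mem_Ico hx k, shiftN_iSeq k x⟩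

lemma digit_eq_of_mem_Ico {y : ℝ} {j : ℕ} (h : β * y + α ∈ Set.Ico (j : ℝ) (j + 1)) :
    digit α β y = j := by
  have : ⌊β * y + α⌋ = j := Int.floor_eq_iff.2 (by exact_mod_cast h)
  simp [digit, this]

lemma T_eq_sub_digit {y : ℝ} (h : 0 ≤ β * y + α) : T α β y = β * y + α - digit α β y := by
  have hcast : ((digit α β y : ℕ) : ℝ) = ((⌊β * y + α⌋ : ℤ) : ℝ) := by
    rw [digit]; exact_mod_cast Int.toNat_of_nonneg (Int.floor_nonneg.2 h)
  rw [T, hcast]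

lemma pre_succ (s : ℕ → ℕ) (n : ℕ) : pre s (n + 1) = pre s n ++ [s n] := by
  simp [pre, List.range_succ]

def cylImage (α β : ℝ) (w : List ℕ) : Set ℝ :=
  (T α β)^[w.length] '' {x ∈ Set.Ico (0 : ℝ) 1 | pre (iSeq α β x) w.length = w}

lemma cylImage_nil : cylImage α β [] = Set.Ico 0 1 := by
  ext; simp [cylImage, pre]

lemma mem_cylImage_append_singleton (hα : 0 ≤ α) (hβ : 0 < β) {w : List ℕ} {j : ℕ} {t : ℝ} :
    t ∈ cylImage α β (w ++ [j]) ↔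
      t ∈ Set.Ico (0 : ℝ) 1 ∧ (t + j - α) / β ∈ cylImage α β w := by
  simp only [cylImage, List.length_append, List.length_singleton, pre_succ, Set.mem_image,
    Set.mem_ofPred_eq]
  constructor
  · rintro ⟨x, ⟨hx, hpre⟩, rfl⟩
    obtain ⟨hw, hj⟩ := List.append_inj' hpre rfl
    have hy := iterate_T_mem_Ico (α := α) (β := β) hx w.length
    have hdig : digit α β ((T α β)^[w.length] x) = j := by simpa [iSeq] using hj
    have hnonneg : 0 ≤ β * (T α β)^[w.length] x + α := by nlinarith [hy.1]
    refine ⟨iterate_T_mem_Ico hx _, x, ⟨hx, hw⟩, ?_⟩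
    rw [Function.iterate_succ_apply', T_eq_sub_digit hnonneg, hdig]
    field_simp
    ring
  · rintro ⟨ht, x, ⟨hx, hw⟩, hxy⟩
    have hlin : β * ((t + j - α) / β) + α = t + j := by field_simp; ring
    have hdig : digit α β ((t + j - α) / β) = j :=
      digit_eq_of_mem_Ico (by rw [hlin]; constructor <;> linarith [ht.1, ht.2])
    refine ⟨x, ⟨hx, ?_⟩, ?_⟩
    · rw [hw, iSeq, hxy, hdig]
    · rw [Function.iterate_succ_apply', hxy, T_eq_sub_digit (by rw [hlin]; linarith [ht.1]),
        hdig, hlin]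
      ring

lemma nonempty_cylImage_of_mem_Lang {w : List ℕ} (hw : w ∈ Lang α β) :
    (cylImage α β w).Nonempty := by
  obtain ⟨s, hs, k, hwk⟩ := hw
  have hU : IsOpen ((Set.Iio (k + w.length)).pi fun i => ({s i} : Set ℕ)) :=
    isOpen_set_pi (Set.finite_Iio _) fun i _ => isOpen_discrete _
  obtain ⟨_, hagree, x, hx, rfl⟩ := mem_closure_iff.1 hs _ hU fun _ _ => rfl
  refine ⟨_, (T α β)^[k] x, ⟨iterate_T_mem_Ico hx k, ?_⟩, rfl⟩
  rw [hwk]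
  simp only [pre, wordN, List.length_map, List.length_range]
  refine List.map_congr_left fun i hi => ?_
  rw [iSeq_iterate]
  exact hagree (k + i) (by simp only [List.mem_range] at hi; simp only [Set.mem_Iio]; omega)

lemma wordApp_mem_expansions {w : List ℕ} {t : ℝ} (ht : t ∈ cylImage α β w) :
    wordApp w (iSeq α β t) ∈ expansions α β := by
  obtain ⟨x, ⟨hx, hpre⟩, rfl⟩ := ht
  refine ⟨x, hx, funext fun n => ?_⟩
  unfold wordApp
  split_ifs with hn
  · rw [← hpre]; simp [pre, hn]
  · rw [iSeq_iterate]; congr 1; omega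

end Expansions

/-- `orbitOne α β m = lim_{x ↑ 1} T^m x`: at a left limit the digit is `⌈·⌉ - 1`, not `⌊·⌋`. -/
def orbitOne (α β : ℝ) : ℕ → ℝ
  | 0 => 1
  | m + 1 => β * orbitOne α β m + α + 1 - ⌈β * orbitOne α β m + α⌉

def bSeq (α β : ℝ) (m : ℕ) : ℕ := (⌈β * orbitOne α β m + α⌉ - 1).toNat

section OrbitOne

variable {α β : ℝ}

lemma orbitOne_mem (m : ℕ) : orbitOne α β m ∈ Set.Ioc (0 : ℝ) 1 := by
  cases m with
  | zero => norm_num [orbitOne]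
  | succ m =>
    have h1 := Int.ceil_lt_add_one (β * orbitOne α β m + α)
    have h2 := Int.le_ceil (β * orbitOne α β m + α)
    constructor <;> simp only [orbitOne] <;> linarith

lemma Ioo_orbitOne_mem_nhdsLT (hβ : 0 < β) (m : ℕ) :
    Set.Ioo (orbitOne α β m - orbitOne α β (m + 1) / β) (orbitOne α β m) ∈
      𝓝[<] (orbitOne α β m) :=
  Ioo_mem_nhdsLT (sub_lt_self _ (div_pos (orbitOne_mem (m + 1)).1 hβ))

variable (hα : 0 ≤ α) (hβ : 0 < β)
include hα hβ

lemma orbitOne_succ (m : ℕ) :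
    orbitOne α β (m + 1) = β * orbitOne α β m + α - bSeq α β m := by
  have hpos : 0 < β * orbitOne α β m + α := by nlinarith [(orbitOne_mem (α := α) (β := β) m).1]
  have hceil : 1 ≤ ⌈β * orbitOne α β m + α⌉ := Int.one_le_ceil_iff.2 hpos
  have hcast : (bSeq α β m : ℝ) = (⌈β * orbitOne α β m + α⌉ : ℤ) - 1 := by
    rw [bSeq]; exact_mod_cast Int.toNat_of_nonneg (by omega)
  rw [hcast, orbitOne]
  ring

lemma mem_Ico_bSeq {m : ℕ} {y : ℝ}
    (hy : y ∈ Set.Ioo (orbitOne α β m - orbitOne α β (m + 1) / β) (orbitOne α β m)) :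
    β * y + α ∈ Set.Ico (bSeq α β m : ℝ) (bSeq α β m + 1) := by
  have hsucc := orbitOne_succ hα hβ m
  have hle := (orbitOne_mem (α := α) (β := β) (m + 1)).2
  have h1 : β * (orbitOne α β m - orbitOne α β (m + 1) / β) < β * y :=
    mul_lt_mul_of_pos_left hy.1 hβ
  have h2 : β * y < β * orbitOne α β m := mul_lt_mul_of_pos_left hy.2 hβ
  rw [mul_sub, mul_div_cancel₀ _ hβ.ne'] at h1
  exact ⟨by linarith, by linarith⟩

lemma tendsto_T_orbitOne (m : ℕ) :
    Tendsto (T α β) (𝓝[<] (orbitOne α β m)) (𝓝[<] (orbitOne α β (m + 1))) := by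
  set f : ℝ → ℝ := fun y => β * y + α - bSeq α β m
  have hf : f (orbitOne α β m) = orbitOne α β (m + 1) := (orbitOne_succ hα hβ m).symm
  have hT : f =ᶠ[𝓝[<] (orbitOne α β m)] T α β := by
    filter_upwards [Ioo_orbitOne_mem_nhdsLT hβ m] with y hy
    have hmem := mem_Ico_bSeq hα hβ hy
    simp only [f]
    rw [T_eq_sub_digit ((Nat.cast_nonneg _).trans hmem.1), digit_eq_of_mem_Ico hmem]
  refine (tendsto_nhdsWithin_of_tendsto_nhds_of_eventually_within _ ?_ ?_).congr' hT
  · rw [← hf]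
    exact ((Continuous.continuousAt (by fun_prop)).tendsto).mono_left nhdsWithin_le_nhds
  · filter_upwards [self_mem_nhdsWithin] with y hy
    rw [← hf]
    show f y < f _
    simp only [f]
    linarith [mul_lt_mul_of_pos_left (Set.mem_Iio.1 hy) hβ]

lemma tendsto_iterate_T_orbitOne (m : ℕ) :
    Tendsto ((T α β)^[m]) (𝓝[<] 1) (𝓝[<] (orbitOne α β m)) := by
  induction m with
  | zero => exact tendsto_id
  | succ m ih => rw [Function.iterate_succ']; exact (tendsto_T_orbitOne hα hβ m).comp ih

lemma tendsto_iSeq_bSeq : Tendsto (iSeq α β) (𝓝[<] 1) (𝓝 (bSeq α β)) := by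
  refine tendsto_pi_nhds.2 fun m => tendsto_const_nhds.congr' ?_
  filter_upwards [tendsto_iterate_T_orbitOne hα hβ m (Ioo_orbitOne_mem_nhdsLT hβ m)] with x hx
  exact (digit_eq_of_mem_Ico (mem_Ico_bSeq hα hβ hx)).symm

lemma orbitOne_add_le {n : ℕ} :
    ∀ {m : ℕ}, (∀ i < m, bSeq α β (n + i) = bSeq α β i) →
      orbitOne α β (n + m) ≤ orbitOne α β m
  | 0, _ => (orbitOne_mem n).2
  | m + 1, h => by
    have ih := orbitOne_add_le (m := m) fun i hi => h i (by omega)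
    rw [← Nat.add_assoc, orbitOne_succ hα hβ, orbitOne_succ hα hβ, h m (by omega)]
    nlinarith

lemma bSeq_add_le {n m : ℕ} (h : ∀ i < m, bSeq α β (n + i) = bSeq α β i) :
    bSeq α β (n + m) ≤ bSeq α β m := by
  have hceil : ⌈β * orbitOne α β (n + m) + α⌉ ≤ ⌈β * orbitOne α β m + α⌉ :=
    Int.ceil_le_ceil (by nlinarith [orbitOne_add_le hα hβ h])
  simp only [bSeq]
  omega

end OrbitOne

section SuffixPrefix

variable {s : ℕ → ℕ} {w : List ℕ}

lemma kk_le_length : kk s w ≤ w.length := Nat.findGreatest_le _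

lemma drop_kk_eq_pre : w.drop (w.length - kk s w) = pre s (kk s w) :=
  Nat.findGreatest_spec (P := fun k => w.drop (w.length - k) = pre s k) (Nat.zero_le _)
    (by simp [pre])

lemma le_kk {m : ℕ} (hm : m ≤ w.length) (h : w.drop (w.length - m) = pre s m) : m ≤ kk s w :=
  Nat.le_findGreatest hm h

lemma drop_append_singleton_eq_pre_iff {j k : ℕ} (hk : k ≤ w.length) :
    (w ++ [j]).drop ((w ++ [j]).length - (k + 1)) = pre s (k + 1) ↔
      w.drop (w.length - k) = pre s k ∧ j = s k := by
  have hlen : (w ++ [j]).length - (k + 1) = w.length - k := by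
    simp only [List.length_append, List.length_singleton]; omega
  rw [hlen, List.drop_append_of_le_length (Nat.sub_le _ _), pre_succ]
  constructor
  · intro h
    obtain ⟨h₁, h₂⟩ := List.append_inj' h (by simp)
    exact ⟨h₁, by simpa using h₂⟩
  · rintro ⟨h₁, rfl⟩
    rw [h₁]

lemma getD_eq_of_drop_eq_pre {m : ℕ} (h : w.drop (w.length - m) = pre s m) {i : ℕ}
    (hi : i < m) : w.getD (w.length - m + i) 0 = s i := by
  have := congrArg (fun l : List ℕ => l.getD i 0) h
  simpa [List.getD_eq_getElem?_getD, pre, List.getElem?_range hi] using this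

lemma apply_add_eq_of_drop_eq_pre {m m' : ℕ} (h : w.drop (w.length - m) = pre s m)
    (h' : w.drop (w.length - m') = pre s m') (hmm' : m ≤ m') (hm' : m' ≤ w.length)
    {i : ℕ} (hi : i < m) : s (m' - m + i) = s i := by
  rw [← getD_eq_of_drop_eq_pre h hi,
    ← getD_eq_of_drop_eq_pre h' (by omega : m' - m + i < m')]
  congr 1
  omega

lemma kk_append_singleton_pos {j : ℕ} (h : 0 < kk s (w ++ [j])) :
    kk s (w ++ [j]) - 1 ≤ kk s w ∧
      w.drop (w.length - (kk s (w ++ [j]) - 1)) = pre s (kk s (w ++ [j]) - 1) ∧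
      j = s (kk s (w ++ [j]) - 1) := by
  obtain ⟨k, hk⟩ : ∃ k, kk s (w ++ [j]) = k + 1 := ⟨_, (Nat.succ_pred_eq_of_pos h).symm⟩
  have hlen : k + 1 ≤ w.length + 1 := by
    simpa [hk] using kk_le_length (s := s) (w := w ++ [j])
  have hspec := drop_kk_eq_pre (s := s) (w := w ++ [j])
  rw [hk, drop_append_singleton_eq_pre_iff (by omega)] at hspec
  simpa [hk] using ⟨le_kk (by omega) hspec.1, hspec.1, hspec.2⟩

lemma kk_append_singleton_self : kk s (w ++ [s (kk s w)]) = kk s w + 1 := by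
  refine le_antisymm ?_ (le_kk ?_ ((drop_append_singleton_eq_pre_iff kk_le_length).2
    ⟨drop_kk_eq_pre, rfl⟩))
  · rcases Nat.eq_zero_or_pos (kk s (w ++ [s (kk s w)])) with h | h
    · omega
    · have := (kk_append_singleton_pos h).1; omega
  · simp only [List.length_append, List.length_singleton]
    have := kk_le_length (s := s) (w := w)
    omega

lemma kk_append_singleton_of_lt (hs : ∀ n m, (∀ i < m, s (n + i) = s i) → s (n + m) ≤ s m)
    {j : ℕ} (hj : j < s (kk s w)) : kk s (w ++ [j]) = 0 := by
  by_contra h0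
  obtain ⟨hle, hmatch, hjs⟩ := kk_append_singleton_pos (Nat.pos_of_ne_zero h0)
  have hdom := hs (kk s w - (kk s (w ++ [j]) - 1)) (kk s (w ++ [j]) - 1)
    fun i hi => apply_add_eq_of_drop_eq_pre hmatch drop_kk_eq_pre hle kk_le_length hi
  rw [Nat.sub_add_cancel hle, ← hjs] at hdom
  omega

end SuffixPrefix

def zeroOnes : ℕ → ℕ := fun n => if n = 0 then 0 else 1

lemma kk_zeroOnes_append_singleton_pos_iff {w : List ℕ} {j : ℕ} :
    0 < kk zeroOnes (w ++ [j]) ↔ j = 0 ∨ (j = 1 ∧ 0 < kk zeroOnes w) := by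
  constructor
  · intro h
    obtain ⟨hle, -, hj⟩ := kk_append_singleton_pos h
    by_cases hk : kk zeroOnes (w ++ [j]) - 1 = 0
    · left; simpa [zeroOnes, hk] using hj
    · right; simp only [zeroOnes, hk, if_false] at hj; omega
  · rintro (rfl | ⟨rfl, hw⟩)
    · have := le_kk (s := zeroOnes) (w := w ++ [0]) (m := 1) (by simp)
        ((drop_append_singleton_eq_pre_iff (Nat.zero_le _)).2 ⟨by simp [pre], rfl⟩)
      omega
    · have h1 : zeroOnes (kk zeroOnes w) = 1 := if_neg hw.ne'
      have := kk_append_singleton_self (s := zeroOnes) (w := w)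
      rw [h1] at this
      omega

section InverseParameter

variable {α β : ℝ} (hβ : 3 < β) (hα : α = 1 / β)
include hβ hα

lemma alpha_pos : 0 < α := by rw [hα]; positivity

lemma alpha_lt_one : α < 1 := by rw [hα, div_lt_one (by linarith)]; linarith

lemma beta_mul_alpha : β * α = 1 := by rw [hα]; field_simp

lemma digit_alpha : digit α β α = 1 :=
  digit_eq_of_mem_Ico (by
    rw [beta_mul_alpha hβ hα]; push_cast
    constructor <;> linarith [alpha_pos hβ hα, alpha_lt_one hβ hα])

lemma T_alpha : T α β α = α := by
  rw [T_eq_sub_digit (by rw [beta_mul_alpha hβ hα]; linarith [alpha_pos hβ hα]),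
    digit_alpha hβ hα, beta_mul_alpha hβ hα]
  push_cast
  ring

lemma iSeq_alpha : iSeq α β α = fun _ => 1 := by
  funext n
  have : (T α β)^[n] α = α := Function.iterate_fixed (T_alpha hβ hα) n
  rw [iSeq, this, digit_alpha hβ hα]

lemma aSeq_eq_zeroOnes : aSeq α β = zeroOnes := by
  funext n
  cases n with
  | zero =>
    refine digit_eq_of_mem_Ico ?_
    simp only [zeroOnes, if_true, Function.iterate_zero, id_eq, mul_zero, zero_add,
      CharP.cast_eq_zero]
    exact ⟨(alpha_pos hβ hα).le, by linarith [alpha_lt_one hβ hα]⟩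
  | succ n =>
    have hT0 : T α β 0 = α := by
      rw [T_eq_sub_digit (by simpa using (alpha_pos hβ hα).le),
        digit_eq_of_mem_Ico (j := 0) (by simpa using ⟨(alpha_pos hβ hα).le, alpha_lt_one hβ hα⟩)]
      simp
    rw [aSeq, ← Nat.add_comm 1, ← iSeq_iterate, Function.iterate_one, hT0, iSeq_alpha hβ hα]
    simp [zeroOnes]

end InverseParameter

section CylinderImage

variable {α β : ℝ}

/-- The left end of `cylImage α β w` when `α = 1/β`; `zeroOnes` is `a = 0 1 1 1 …`. -/
def cylLeft (α : ℝ) (w : List ℕ) : ℝ := if kk zeroOnes w = 0 then 0 else α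

def cylRight (α β : ℝ) (w : List ℕ) : ℝ := orbitOne α β (kk (bSeq α β) w)

lemma cylRight_append_singleton (hα : 0 ≤ α) (hβ : 0 < β) {w : List ℕ} {j : ℕ}
    (hj : (j : ℝ) < β * cylRight α β w + α) :
    cylRight α β (w ++ [j]) = min (β * cylRight α β w + α - j) 1 := by
  set K := kk (bSeq α β) w
  have hsucc : orbitOne α β (K + 1) = β * cylRight α β w + α - bSeq α β K :=
    orbitOne_succ hα hβ K
  have hmem := orbitOne_mem (α := α) (β := β) (K + 1)
  have hjb : j ≤ bSeq α β K := by
    have : (j : ℝ) < bSeq α β K + 1 := by linarith [hmem.2]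
    exact_mod_cast Nat.lt_succ_iff.mp (by exact_mod_cast this)
  rcases hjb.lt_or_eq with hlt | rfl
  · have hlt' : (j : ℝ) + 1 ≤ bSeq α β K := by exact_mod_cast hlt
    rw [cylRight, kk_append_singleton_of_lt (fun _ _ h => bSeq_add_le hα hβ h) hlt,
      min_eq_right (by linarith [hmem.1])]
    rfl
  · rw [cylRight, kk_append_singleton_self, ← hsucc, min_eq_left hmem.2]

section
variable (hβ : 3 < β) (hα : α = 1 / β)
include hβ hα

lemma cylLeft_append_singleton {w : List ℕ} {j : ℕ} (hj : β * cylLeft α w + α < j + 1) :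
    cylLeft α (w ++ [j]) = max (β * cylLeft α w + α - j) 0 := by
  have ha0 := alpha_pos hβ hα
  have ha1 := alpha_lt_one hβ hα
  have hba := beta_mul_alpha hβ hα
  have key := kk_zeroOnes_append_singleton_pos_iff (w := w) (j := j)
  unfold cylLeft at hj ⊢
  split_ifs at hj ⊢ with h h'
  · have : (1 : ℝ) ≤ j := by exact_mod_cast (show 1 ≤ j by omega)
    rw [eq_comm, max_eq_right (by linarith)]
  · have : (2 : ℝ) ≤ j := by exact_mod_cast (show 2 ≤ j by omega)
    rw [eq_comm, max_eq_right (by linarith)]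
  · obtain rfl : j = 0 := by omega
    simp [ha0.le]
  · rw [hba] at hj ⊢
    obtain rfl : j = 1 := by
      rcases (show j = 0 ∨ j = 1 by omega) with rfl | rfl
      · norm_num at hj; linarith
      · rfl
    simp [ha0.le]

lemma cylImage_eq_Ico {w : List ℕ} (hw : (cylImage α β w).Nonempty) :
    cylImage α β w = Set.Ico (cylLeft α w) (cylRight α β w) := by
  have hα0 := (alpha_pos hβ hα).le
  have hβ0 : 0 < β := by linarith
  induction w using List.reverseRecOn with
  | nil => simp [cylImage_nil, cylLeft, cylRight, kk, orbitOne]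
  | append_singleton w j ih =>
    obtain ⟨t, ht⟩ := hw
    rw [mem_cylImage_append_singleton hα0 hβ0] at ht
    have ih' := ih ⟨_, ht.2⟩
    rw [ih', Set.mem_Ico, Set.mem_Ico, le_div_iff₀ hβ0, div_lt_iff₀ hβ0] at ht
    obtain ⟨⟨ht0, ht1⟩, hγ, hδ⟩ := ht
    rw [cylLeft_append_singleton hβ hα (by linarith),
      cylRight_append_singleton hα0 hβ0 (by linarith)]
    ext s
    rw [mem_cylImage_append_singleton hα0 hβ0, ih', Set.mem_Ico, Set.mem_Ico, Set.mem_Ico,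
      le_div_iff₀ hβ0, div_lt_iff₀ hβ0, max_le_iff, lt_min_iff]
    constructor
    · rintro ⟨⟨hs0, hs1⟩, hsγ, hsδ⟩
      exact ⟨⟨by linarith, hs0⟩, by linarith, hs1⟩
    · rintro ⟨⟨hsγ, hs0⟩, hsδ, hs1⟩
      exact ⟨⟨hs0, hs1⟩, by linarith, by linarith⟩

end

end CylinderImage

section Realisation

variable {α β : ℝ} (hβ : 3 < β) (hα : α = 1 / β)
include hβ hα

lemma gW_div_mem_cylImage {w : List ℕ} (hw : (cylImage α β w).Nonempty) :
    (gW zeroOnes (bSeq α β) w : ℝ) / β ∈ cylImage α β w := by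
  have hβ0 : 0 < β := by linarith
  have hα0 := alpha_pos hβ hα
  have hI := cylImage_eq_Ico hβ hα hw
  rw [hI] at hw ⊢
  obtain ⟨t, ht⟩ := hw
  have hleft : cylLeft α w ≤ α := by unfold cylLeft; split_ifs <;> linarith
  unfold gW
  split_ifs with hg
  · simpa [cylLeft, cylRight, hg.1] using (orbitOne_mem _).1
  · push_cast
    refine ⟨hα ▸ hleft, ?_⟩
    by_cases hK1 : kk zeroOnes w = 0
    · rw [cylRight]
      rcases Nat.eq_zero_or_pos (kk (bSeq α β) w) with hK2 | hK2
      · rw [hK2, orbitOne, div_lt_one hβ0]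
        linarith
      · -- the rule defining `g` leaves `b_{k₂} ≥ 2`, whence `β δ_w + α > 2`
        have hb2 : (2 : ℝ) ≤ bSeq α β (kk (bSeq α β) w) := by
          exact_mod_cast (show 2 ≤ bSeq α β (kk (bSeq α β) w) by
            by_contra h; exact hg ⟨hK1, hK2, by omega⟩)
        have hsucc := orbitOne_succ hα0.le hβ0 (kk (bSeq α β) w)
        have hpos := (orbitOne_mem (α := α) (β := β) (kk (bSeq α β) w + 1)).1
        rw [div_lt_iff₀ hβ0]
        linarith [alpha_lt_one hβ hα]
    · have : cylLeft α w = α := if_neg hK1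
      rw [← hα]
      exact (this.symm.le.trans ht.1).trans_lt ht.2

lemma wordApp_gW_mem_expansions {w : List ℕ} (hw : (cylImage α β w).Nonempty) :
    wordApp (w ++ [gW zeroOnes (bSeq α β) w]) (fun _ => 1) ∈ expansions α β := by
  have hα0 := alpha_pos hβ hα
  rw [← iSeq_alpha hβ hα]
  refine wordApp_mem_expansions
    ((mem_cylImage_append_singleton hα0.le (by linarith)).2 ⟨⟨hα0.le, alpha_lt_one hβ hα⟩, ?_⟩)
  rw [add_sub_cancel_left]
  exact gW_div_mem_cylImage hβ hα hw

lemma wordApp_one_mem_expansions {s : ℕ → ℕ} (hs : s ∈ expansions α β) :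
    wordApp [1] s ∈ expansions α β := by
  have hβ0 : 0 < β := by linarith
  have hα1 := alpha_lt_one hβ hα
  obtain ⟨t, ht, rfl⟩ := hs
  refine wordApp_mem_expansions
    ((mem_cylImage_append_singleton (w := []) (alpha_pos hβ hα).le hβ0).2 ⟨ht, ?_⟩)
  rw [cylImage_nil, Set.mem_Ico, div_lt_one hβ0]
  push_cast
  exact ⟨div_nonneg (by linarith [ht.1]) hβ0.le, by linarith [ht.2, alpha_pos hβ hα]⟩

end Realisation

lemma tail_eq_shiftN (x : ℤ → ℕ) {k q : ℤ} (h : k ≤ q) :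
    (fun n : ℕ => x (q + n)) = shiftN (q - k).toNat fun n : ℕ => x (k + n) := by
  funext n
  simp only [shiftN]
  congr 1
  push_cast
  omega

lemma tail_sub_one_eq_wordApp (x : ℤ → ℕ) {q : ℤ} (h : x (q - 1) = 1) :
    (fun n : ℕ => x (q - 1 + n)) = wordApp [1] fun n : ℕ => x (q + n) := by
  funext n
  simp only [wordApp, List.length_singleton]
  split_ifs with hn
  · obtain rfl : n = 0 := by omega
    simpa using h
  · congr 1
    push_cast [Nat.cast_sub (by omega : 1 ≤ n)]
    ring

lemma wSharp_of_lt (a b : ℕ → ℕ) (k : ℤ) (w : List ℕ) {j : ℤ} (h : j < k) :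
    wSharp a b k w j = 1 := by
  simp only [wSharp]
  rw [if_neg (by omega), if_neg (by omega)]

lemma wSharp_tail (a b : ℕ → ℕ) (k : ℤ) (w : List ℕ) :
    (fun n : ℕ => wSharp a b k w (k + n)) = wordApp (w ++ [gW a b w]) fun _ => 1 := by
  funext n
  simp only [wSharp, wordApp, List.length_append, List.length_singleton]
  rcases lt_trichotomy n w.length with h | rfl | h
  · rw [if_pos ⟨by omega, by omega⟩, if_pos (by omega), List.getD_append _ _ _ _ h]
    congr 1
    omega
  · rw [if_neg (by omega), if_pos rfl, if_pos (by omega)]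
    simp
  · rw [if_neg (by omega), if_neg (by omega), if_neg (by omega)]

/-- extending a word of the language by `g(w)` and `1`s in both directions
gives a point of `Σ^{α,β}`. -/
theorem stmt11 (α β : ℝ) (hβ : 3 < β) (hα : α = 1 / β)
    (b : ℕ → ℕ) (hb : Tendsto (iSeq α β) (𝓝[<] (1 : ℝ)) (𝓝 b))
    (w : List ℕ) (hw : w ∈ Lang α β) (k : ℤ) :
    wSharp (aSeq α β) b k w ∈ SigmaAB α β := by
  obtain rfl : b = bSeq α β :=
    tendsto_nhds_unique hb (tendsto_iSeq_bSeq (alpha_pos hβ hα).le (by linarith))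
  have hk : (fun n : ℕ => wSharp (aSeq α β) (bSeq α β) k w (k + n)) ∈ expansions α β := by
    rw [wSharp_tail, aSeq_eq_zeroOnes hβ hα]
    exact wordApp_gW_mem_expansions hβ hα (nonempty_cylImage_of_mem_Lang hw)
  intro q
  apply subset_closure
  rcases le_or_gt k q with hq | hq
  · rw [tail_eq_shiftN _ hq]
    exact shiftN_mem_expansions _ hk
  · refine Int.leInductionDown (m := k)
      (motive := fun n _ => (fun i : ℕ => wSharp (aSeq α β) (bSeq α β) k w (n + i)) ∈
        expansions α β) hk (fun n hn ih => ?_) q hq.le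
    rw [tail_sub_one_eq_wordApp _ (wSharp_of_lt _ _ _ _ (by omega))]
    exact wordApp_one_mem_expansions hβ hα ih

end AB
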